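/- Let w : ℝ × ℝ → ℝ be smooth, strictly positive, and 2π-periodic in x, satisfying the evolution equation w_τ = ∂_x²(w_x·w^{−3/2}). Then the functional ∫₀^{2π} w^{−5/2}·(w_x)² dx is independent of τ; i.e., γ₁ = (1/8)∫₀^{2π} u_{xx}^{−5/2} u_{xxx}² dx (with w = u_{xx}) is a conservation law of the dispersive flow u_τ = u_{xxx}(u_{xx})^{−3/2}. -/

import Mathlib

/-!
Write `T = w^{-1/2}`, so that `∂ₓT = -(1/2) w_x T³`. Then `w_τ = ∂ₓ²(w_x T³)` and `∂ₓ w_τ` are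
polynomials in `T` and the `x`-derivatives of `w`, and so, after exchanging `∂_τ ∂ₓ = ∂ₓ ∂_τ`, is
the `τ`-derivative of the density `w^{-5/2} w_x² = T⁵ w_x²`. This rate is the exact `x`-derivative
of the flux `95/16 T¹² w_x⁴ - 13/2 T¹⁰ w_x² w_xx - T⁸ w_xx² + 2 T⁸ w_x w_xxx`, which is
`2π`-periodic, so the rate integrates to zero over a period. By Fubini, the difference of the
functional at two times is the time integral of these vanishing integrals.
-/

open Real intervalIntegral Function MeasureTheory
open scoped ContDiff

theorem Function.Periodic.deriv {𝕜 F : Type*} [NontriviallyNormedField 𝕜] [NormedAddCommGroup F]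
    [NormedSpace 𝕜 F] {f : 𝕜 → F} {c : 𝕜} (hf : Periodic f c) : Periodic (deriv f) c := fun x => by
  rw [← deriv_comp_add_const, hf.funext]

theorem rpow_neg_half_pow {a : ℝ} (ha : 0 ≤ a) (n : ℕ) :
    (a ^ (-(1 : ℝ) / 2)) ^ n = a ^ (-(n : ℝ) / 2) := by
  rw [← rpow_natCast, ← rpow_mul ha]; ring_nf

theorem HasDerivAt.rpow_neg_half {f : ℝ → ℝ} {f' x : ℝ} (hf : HasDerivAt f f' x) (hx : 0 < f x) :
    HasDerivAt (fun y => f y ^ (-(1 : ℝ) / 2)) (-(1 / 2) * f' * (f x ^ (-(1 : ℝ) / 2)) ^ 3) x := by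
  convert hf.rpow_const (p := -(1 : ℝ) / 2) (Or.inl hx.ne') using 1
  rw [rpow_neg_half_pow hx.le]; ring_nf

theorem intervalIntegral_sub_eq_integral_integral_of_hasDerivAt {g g' : ℝ × ℝ → ℝ}
    (hg : Continuous g) (hg' : Continuous g')
    (hderiv : ∀ x s, HasDerivAt (fun s => g (x, s)) (g' (x, s)) s) (a b c d : ℝ) :
    (∫ x in a..b, g (x, d)) - ∫ x in a..b, g (x, c) = ∫ s in c..d, ∫ x in a..b, g' (x, s) := by
  have hsection : ∀ s, Continuous fun x => g (x, s) := fun s => hg.comp (.prodMk_left s)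
  calc (∫ x in a..b, g (x, d)) - ∫ x in a..b, g (x, c)
      = ∫ x in a..b, (g (x, d) - g (x, c)) :=
        (integral_sub ((hsection d).intervalIntegrable _ _)
          ((hsection c).intervalIntegrable _ _)).symm
    _ = ∫ x in a..b, ∫ s in c..d, g' (x, s) := integral_congr fun x _ =>
        (integral_eq_sub_of_hasDerivAt (fun s _ => hderiv x s)
          ((hg'.comp (.prodMk_right x)).intervalIntegrable _ _)).symm
    _ = ∫ s in c..d, ∫ x in a..b, g' (x, s) :=
        intervalIntegral_intervalIntegral_swap <|
          (hg'.continuousOn.integrableOn_compact (isCompact_uIcc.prod isCompact_uIcc)).mono_set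
            (Set.prod_mono Set.uIoc_subset_uIcc Set.uIoc_subset_uIcc)

section PartialDeriv

variable {E : Type*} [NormedAddCommGroup E] [NormedSpace ℝ E] {F : ℝ × ℝ → E}

noncomputable def partialFst (F : ℝ × ℝ → E) (p : ℝ × ℝ) : E := fderiv ℝ F p (1, 0)

noncomputable def partialSnd (F : ℝ × ℝ → E) (p : ℝ × ℝ) : E := fderiv ℝ F p (0, 1)

theorem contDiff_partialFst (hF : ContDiff ℝ ∞ F) : ContDiff ℝ ∞ (partialFst F) :=
  (hF.fderiv_right (by simp)).clm_apply contDiff_const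

theorem contDiff_partialSnd (hF : ContDiff ℝ ∞ F) : ContDiff ℝ ∞ (partialSnd F) :=
  (hF.fderiv_right (by simp)).clm_apply contDiff_const

theorem contDiff_iterate_partialFst (hF : ContDiff ℝ ∞ F) (k : ℕ) :
    ContDiff ℝ ∞ (partialFst^[k] F) := by
  induction k with
  | zero => exact hF
  | succ k ih => rw [iterate_succ_apply']; exact contDiff_partialFst ih

theorem hasDerivAt_partialFst (hF : Differentiable ℝ F) (x τ : ℝ) :
    HasDerivAt (fun y => F (y, τ)) (partialFst F (x, τ)) x :=
  (hF (x, τ)).hasFDerivAt.comp_hasDerivAt x ((hasDerivAt_id x).prodMk (hasDerivAt_const x τ))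

theorem hasDerivAt_partialSnd (hF : Differentiable ℝ F) (x τ : ℝ) :
    HasDerivAt (fun s => F (x, s)) (partialSnd F (x, τ)) τ :=
  (hF (x, τ)).hasFDerivAt.comp_hasDerivAt τ ((hasDerivAt_const τ x).prodMk (hasDerivAt_id τ))

theorem partialSnd_partialFst (hF : ContDiff ℝ 2 F) :
    partialSnd (partialFst F) = partialFst (partialSnd F) := by
  funext p
  have hF' : Differentiable ℝ (fderiv ℝ F) :=
    (hF.fderiv_right one_add_one_eq_two.le).differentiable one_ne_zero
  have hswap : ∀ u v, fderiv ℝ (fun q => fderiv ℝ F q u) p v = fderiv ℝ (fderiv ℝ F) p v u :=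
    fun u v => by rw [fderiv_clm_apply (hF' p) (differentiableAt_const u)]; simp
  change fderiv ℝ (fun q => fderiv ℝ F q (1, 0)) p (0, 1)
    = fderiv ℝ (fun q => fderiv ℝ F q (0, 1)) p (1, 0)
  rw [hswap, hswap, hF.contDiffAt.isSymmSndFDerivAt (by simp)]

theorem periodic_partialFst (hF : Differentiable ℝ F) {c τ : ℝ}
    (h : Periodic (fun y => F (y, τ)) c) : Periodic (fun y => partialFst F (y, τ)) c := by
  have hsection : (fun y => partialFst F (y, τ)) = deriv fun y => F (y, τ) :=
    funext fun y => (hasDerivAt_partialFst hF y τ).deriv.symm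
  rw [hsection]
  exact h.deriv

end PartialDeriv

noncomputable section

/-! In `DispersiveFlow.Jet`, `t` stands for `f^{-1/2}` and `aₖ` for `∂ₓᵏ f`. Since
`∂ₓ t = -(1/2) a₁ t³`, the `x`-derivative of a polynomial in these is again one. -/

namespace DispersiveFlow.Jet

/-- `∂ₓ²(a₁ t³)`, the right-hand side of the flow. -/
def velocity (t a₁ a₂ a₃ : ℝ) : ℝ :=
  a₃ * t ^ 3 - 9 / 2 * a₁ * a₂ * t ^ 5 + 15 / 4 * a₁ ^ 3 * t ^ 7

def velocityDeriv (t a₁ a₂ a₃ a₄ : ℝ) : ℝ :=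
  a₄ * t ^ 3 - 6 * a₁ * a₃ * t ^ 5 - 9 / 2 * a₂ ^ 2 * t ^ 5 + 45 / 2 * a₁ ^ 2 * a₂ * t ^ 7
    - 105 / 8 * a₁ ^ 4 * t ^ 9

/-- The variation of the density `t⁵ a₁²` when `f` varies at rate `v` and `a₁` at rate `v'`. -/
def densityVariation (t a₁ v v' : ℝ) : ℝ :=
  -(5 / 2) * t ^ 7 * a₁ ^ 2 * v + 2 * t ^ 5 * a₁ * v'

def flux (t a₁ a₂ a₃ : ℝ) : ℝ :=
  95 / 16 * t ^ 12 * a₁ ^ 4 - 13 / 2 * t ^ 10 * a₁ ^ 2 * a₂ - t ^ 8 * a₂ ^ 2 + 2 * t ^ 8 * a₁ * a₃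

variable {T f₁ f₂ f₃ f₄ : ℝ → ℝ} {x : ℝ}

theorem deriv_deriv_mul_pow_three (hT : ∀ x, HasDerivAt T (-(1 / 2) * f₁ x * T x ^ 3) x)
    (h₁ : ∀ x, HasDerivAt f₁ (f₂ x) x) (h₂ : ∀ x, HasDerivAt f₂ (f₃ x) x) :
    deriv (deriv fun x => f₁ x * T x ^ 3) = fun x => velocity (T x) (f₁ x) (f₂ x) (f₃ x) := by
  have hfirst :
      deriv (fun x => f₁ x * T x ^ 3) = fun x => f₂ x * T x ^ 3 - 3 / 2 * f₁ x ^ 2 * T x ^ 5 :=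
    funext fun x => HasDerivAt.deriv <|
      ((h₁ x).fun_mul ((hT x).fun_pow 3)).congr_deriv (by ring)
  rw [hfirst]
  funext x
  exact HasDerivAt.deriv <| (((h₂ x).fun_mul ((hT x).fun_pow 3)).fun_sub
    ((((h₁ x).fun_pow 2).const_mul (3 / 2)).fun_mul ((hT x).fun_pow 5))).congr_deriv
    (by unfold velocity; ring)

theorem hasDerivAt_velocity (hT : HasDerivAt T (-(1 / 2) * f₁ x * T x ^ 3) x)
    (h₁ : HasDerivAt f₁ (f₂ x) x) (h₂ : HasDerivAt f₂ (f₃ x) x) (h₃ : HasDerivAt f₃ (f₄ x) x) :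
    HasDerivAt (fun y => velocity (T y) (f₁ y) (f₂ y) (f₃ y))
      (velocityDeriv (T x) (f₁ x) (f₂ x) (f₃ x) (f₄ x)) x :=
  (((h₃.fun_mul (hT.fun_pow 3)).fun_sub
    (((h₁.const_mul (9 / 2)).fun_mul h₂).fun_mul (hT.fun_pow 5))).fun_add
    (((h₁.fun_pow 3).const_mul (15 / 4)).fun_mul (hT.fun_pow 7))).congr_deriv
    (by unfold velocityDeriv; ring)

theorem hasDerivAt_flux (hT : HasDerivAt T (-(1 / 2) * f₁ x * T x ^ 3) x)
    (h₁ : HasDerivAt f₁ (f₂ x) x) (h₂ : HasDerivAt f₂ (f₃ x) x) (h₃ : HasDerivAt f₃ (f₄ x) x) :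
    HasDerivAt (fun y => flux (T y) (f₁ y) (f₂ y) (f₃ y))
      (densityVariation (T x) (f₁ x) (velocity (T x) (f₁ x) (f₂ x) (f₃ x))
        (velocityDeriv (T x) (f₁ x) (f₂ x) (f₃ x) (f₄ x))) x :=
  ((((((hT.fun_pow 12).const_mul (95 / 16)).fun_mul (h₁.fun_pow 4)).fun_sub
    ((((hT.fun_pow 10).const_mul (13 / 2)).fun_mul (h₁.fun_pow 2)).fun_mul h₂)).fun_sub
    ((hT.fun_pow 8).fun_mul (h₂.fun_pow 2))).fun_add
    ((((hT.fun_pow 8).const_mul 2).fun_mul h₁).fun_mul h₃)).congr_deriv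
    (by unfold densityVariation velocity velocityDeriv; ring)

theorem hasDerivAt_density {v v' : ℝ} (hT : HasDerivAt T (-(1 / 2) * v * T x ^ 3) x)
    (h₁ : HasDerivAt f₁ v' x) :
    HasDerivAt (fun y => T y ^ 5 * f₁ y ^ 2) (densityVariation (T x) (f₁ x) v v') x :=
  ((hT.fun_pow 5).fun_mul (h₁.fun_pow 2)).congr_deriv
    (by unfold densityVariation; ring)

end DispersiveFlow.Jet

namespace DispersiveFlow

variable {F : ℝ × ℝ → ℝ}

def invSqrt (F : ℝ × ℝ → ℝ) (p : ℝ × ℝ) : ℝ := F p ^ (-(1 : ℝ) / 2)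

def velocity (F : ℝ × ℝ → ℝ) (p : ℝ × ℝ) : ℝ :=
  Jet.velocity (invSqrt F p) (partialFst F p) (partialFst^[2] F p) (partialFst^[3] F p)

def velocityDeriv (F : ℝ × ℝ → ℝ) (p : ℝ × ℝ) : ℝ :=
  Jet.velocityDeriv (invSqrt F p) (partialFst F p) (partialFst^[2] F p) (partialFst^[3] F p)
    (partialFst^[4] F p)

def density (F : ℝ × ℝ → ℝ) (p : ℝ × ℝ) : ℝ := invSqrt F p ^ 5 * partialFst F p ^ 2

def densityRate (F : ℝ × ℝ → ℝ) (p : ℝ × ℝ) : ℝ :=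
  Jet.densityVariation (invSqrt F p) (partialFst F p) (velocity F p) (velocityDeriv F p)

def flux (F : ℝ × ℝ → ℝ) (p : ℝ × ℝ) : ℝ :=
  Jet.flux (invSqrt F p) (partialFst F p) (partialFst^[2] F p) (partialFst^[3] F p)

theorem continuous_invSqrt (hF : Continuous F) (hpos : ∀ p, 0 < F p) : Continuous (invSqrt F) :=
  hF.rpow_const fun p => Or.inl (hpos p).ne'

theorem hasDerivAt_invSqrt_fst (hF : Differentiable ℝ F) (hpos : ∀ p, 0 < F p) (x τ : ℝ) :
    HasDerivAt (fun y => invSqrt F (y, τ))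
      (-(1 / 2) * partialFst F (x, τ) * invSqrt F (x, τ) ^ 3) x :=
  (hasDerivAt_partialFst hF x τ).rpow_neg_half (hpos _)

theorem hasDerivAt_invSqrt_snd (hF : Differentiable ℝ F) (hpos : ∀ p, 0 < F p) (x τ : ℝ) :
    HasDerivAt (fun s => invSqrt F (x, s))
      (-(1 / 2) * partialSnd F (x, τ) * invSqrt F (x, τ) ^ 3) τ :=
  (hasDerivAt_partialSnd hF x τ).rpow_neg_half (hpos _)

theorem hasDerivAt_iterate_partialFst (hF : ContDiff ℝ ∞ F) (k : ℕ) (x τ : ℝ) :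
    HasDerivAt (fun y => partialFst^[k] F (y, τ)) (partialFst^[k + 1] F (x, τ)) x := by
  rw [iterate_succ_apply']
  exact hasDerivAt_partialFst ((contDiff_iterate_partialFst hF k).differentiable (by simp)) x τ

theorem partialSnd_eq_velocity (hF : ContDiff ℝ ∞ F) (hpos : ∀ p, 0 < F p)
    (hflow : ∀ x τ, deriv (fun s => F (x, s)) τ =
      deriv (deriv fun y => deriv (fun z => F (z, τ)) y * F (y, τ) ^ (-(3 : ℝ) / 2)) x) :
    partialSnd F = velocity F := by
  have hd : Differentiable ℝ F := hF.differentiable (by simp)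
  funext ⟨x, τ⟩
  have hinner : (fun y => deriv (fun z => F (z, τ)) y * F (y, τ) ^ (-(3 : ℝ) / 2)) =
      fun y => partialFst F (y, τ) * invSqrt F (y, τ) ^ 3 := funext fun y => by
    rw [(hasDerivAt_partialFst hd y τ).deriv, invSqrt, rpow_neg_half_pow (hpos _).le]
    norm_num
  rw [← (hasDerivAt_partialSnd hd x τ).deriv, hflow, hinner,
    Jet.deriv_deriv_mul_pow_three (hasDerivAt_invSqrt_fst hd hpos · τ)
      (hasDerivAt_iterate_partialFst hF 1 · τ) (hasDerivAt_iterate_partialFst hF 2 · τ)]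
  rfl

theorem partialSnd_partialFst_eq_velocityDeriv (hF : ContDiff ℝ ∞ F) (hpos : ∀ p, 0 < F p)
    (hvel : partialSnd F = velocity F) : partialSnd (partialFst F) = velocityDeriv F := by
  have hd : Differentiable ℝ F := hF.differentiable (by simp)
  have hvd : Differentiable ℝ (velocity F) :=
    hvel ▸ (contDiff_partialSnd hF).differentiable (by simp)
  rw [partialSnd_partialFst (hF.of_le ENat.LEInfty.out), hvel]
  funext ⟨x, τ⟩
  exact (hasDerivAt_partialFst hvd x τ).unique <|
    Jet.hasDerivAt_velocity (f₄ := fun y => partialFst^[4] F (y, τ))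
      (hasDerivAt_invSqrt_fst hd hpos x τ) (hasDerivAt_iterate_partialFst hF 1 x τ)
      (hasDerivAt_iterate_partialFst hF 2 x τ) (hasDerivAt_iterate_partialFst hF 3 x τ)

theorem hasDerivAt_density_snd (hF : ContDiff ℝ ∞ F) (hpos : ∀ p, 0 < F p)
    (hvel : partialSnd F = velocity F) (x τ : ℝ) :
    HasDerivAt (fun s => density F (x, s)) (densityRate F (x, τ)) τ := by
  have hT := hasDerivAt_invSqrt_snd (hF.differentiable (by simp)) hpos x τ
  have hW₁ := hasDerivAt_partialSnd ((contDiff_partialFst hF).differentiable (by simp)) x τ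
  rw [hvel] at hT
  rw [partialSnd_partialFst_eq_velocityDeriv hF hpos hvel] at hW₁
  exact Jet.hasDerivAt_density hT hW₁

theorem hasDerivAt_flux_fst (hF : ContDiff ℝ ∞ F) (hpos : ∀ p, 0 < F p) (x τ : ℝ) :
    HasDerivAt (fun y => flux F (y, τ)) (densityRate F (x, τ)) x :=
  Jet.hasDerivAt_flux (f₄ := fun y => partialFst^[4] F (y, τ))
    (hasDerivAt_invSqrt_fst (hF.differentiable (by simp)) hpos x τ)
    (hasDerivAt_iterate_partialFst hF 1 x τ) (hasDerivAt_iterate_partialFst hF 2 x τ)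
    (hasDerivAt_iterate_partialFst hF 3 x τ)

theorem continuous_density (hF : ContDiff ℝ ∞ F) (hpos : ∀ p, 0 < F p) :
    Continuous (density F) := by
  have hT := continuous_invSqrt hF.continuous hpos
  have h₁ := (contDiff_partialFst hF).continuous
  unfold density
  fun_prop

theorem continuous_densityRate (hF : ContDiff ℝ ∞ F) (hpos : ∀ p, 0 < F p) :
    Continuous (densityRate F) := by
  have hT := continuous_invSqrt hF.continuous hpos
  have hW k : Continuous (partialFst^[k] F) := (contDiff_iterate_partialFst hF k).continuous
  have h₁ : Continuous (partialFst F) := hW 1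
  have h₂ := hW 2
  have h₃ := hW 3
  have h₄ := hW 4
  unfold densityRate velocity velocityDeriv Jet.densityVariation Jet.velocity Jet.velocityDeriv
  fun_prop

theorem periodic_flux (hF : ContDiff ℝ ∞ F) {c τ : ℝ} (hper : Periodic (fun x => F (x, τ)) c) :
    Periodic (fun x => flux F (x, τ)) c := by
  have hW k : Periodic (fun x => partialFst^[k] F (x, τ)) c := by
    induction k with
    | zero => exact hper
    | succ k ih =>
      simp only [iterate_succ_apply']
      exact periodic_partialFst ((contDiff_iterate_partialFst hF k).differentiable (by simp)) ih
  intro x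
  have h₀ : F (x + c, τ) = F (x, τ) := hper x
  have h₁ : partialFst F (x + c, τ) = partialFst F (x, τ) := hW 1 x
  have h₂ : partialFst^[2] F (x + c, τ) = partialFst^[2] F (x, τ) := hW 2 x
  have h₃ : partialFst^[3] F (x + c, τ) = partialFst^[3] F (x, τ) := hW 3 x
  simp only [flux, invSqrt, h₀, h₁, h₂, h₃]

theorem integral_densityRate_eq_zero (hF : ContDiff ℝ ∞ F) (hpos : ∀ p, 0 < F p) {c : ℝ}
    (hper : ∀ τ, Periodic (fun x => F (x, τ)) c) (τ a : ℝ) :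
    ∫ x in a..a + c, densityRate F (x, τ) = 0 := by
  rw [intervalIntegral.integral_eq_sub_of_hasDerivAt (fun x _ => hasDerivAt_flux_fst hF hpos x τ)
    (((continuous_densityRate hF hpos).comp (.prodMk_left τ)).intervalIntegrable _ _)]
  exact sub_eq_zero.2 (periodic_flux hF (hper τ) a)

end DispersiveFlow

end

open DispersiveFlow

/-- Let `w(x,τ)` be smooth, strictly positive and
`2π`-periodic in `x`, satisfying `w_τ = ∂_x²(w_x·w^{−3/2})`. Then the
functional `∫₀^{2π} w^{−5/2}·(w_x)² dx` is independent of `τ`; i.e.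
`γ₁ = (1/8)∫₀^{2π} u_{xx}^{−5/2} u_{xxx}² dx` (with `w = u_{xx}`) is a
conservation law of the dispersive flow `u_τ = u_{xxx}(u_{xx})^{−3/2}`. -/
theorem dispersive_flow_conservation_gamma_one
    (w : ℝ → ℝ → ℝ)
    (hw : ContDiff ℝ (⊤ : ℕ∞) (Function.uncurry w))
    (hpos : ∀ x τ, 0 < w x τ)
    (hper : ∀ τ, Function.Periodic (fun x => w x τ) (2 * π))
    (hflow : ∀ x τ,
      deriv (fun τ' => w x τ') τ
        = deriv (deriv (fun x' =>
            deriv (fun y => w y τ) x' * (w x' τ) ^ (-(3 : ℝ) / 2))) x) :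
    ∀ τ₁ τ₂,
      (∫ x in (0 : ℝ)..(2 * π), (w x τ₁) ^ (-(5 : ℝ) / 2) * (deriv (fun y => w y τ₁) x) ^ 2)
        = ∫ x in (0 : ℝ)..(2 * π), (w x τ₂) ^ (-(5 : ℝ) / 2) * (deriv (fun y => w y τ₂) x) ^ 2 := by
  intro τ₁ τ₂
  have hpos' : ∀ p, 0 < uncurry w p := fun p => hpos p.1 p.2
  have hdensity τ : (fun x => w x τ ^ (-(5 : ℝ) / 2) * deriv (fun y => w y τ) x ^ 2) =
      fun x => density (uncurry w) (x, τ) := funext fun x => by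
    have hx : deriv (fun y => w y τ) x = partialFst (uncurry w) (x, τ) :=
      (hasDerivAt_partialFst (hw.differentiable (by simp)) x τ).deriv
    rw [density, invSqrt, uncurry_apply_pair, rpow_neg_half_pow (hpos x τ).le, hx]
    norm_num
  have hzero τ : ∫ x in (0 : ℝ)..2 * π, densityRate (uncurry w) (x, τ) = 0 := by
    simpa using integral_densityRate_eq_zero hw hpos' hper τ 0
  rw [← sub_eq_zero, hdensity, hdensity, intervalIntegral_sub_eq_integral_integral_of_hasDerivAt
    (continuous_density hw hpos') (continuous_densityRate hw hpos')
    (hasDerivAt_density_snd hw hpos' (partialSnd_eq_velocity hw hpos' hflow))]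
  simp [hzero]
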